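/- arXiv:2105.10373 — 6 statements merged into one kernel-verified Lean document; each statement's English description precedes it below -/
import Mathlib

section
/- Coercivity of the threshold functional: let G be a standard Gaussian, N independent of G with a symmetric distribution satisfying E[N²] < ∞, σ > 0 and ε > 0. If P(σN ≥ 2ε) > 0, then E[((|G + tσN| − tε)₊)²] ≥ t²ε² · P(σN ≥ 2ε, G > 0) for all t ≥ 0, and E[((|G + tσN| − tε)₊)²] → ∞ as t → ±∞; in particular the infimum inf_{t∈ℝ} E[((|G + tσN| − tε)₊)²] is attained at some finite t_⋆. -/
open MeasureTheory ProbabilityTheory Filter Topology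

/-!
On the event `{σN ≥ 2ε, G > 0}` one has `|G + tσN| - tε ≥ tε` for `t ≥ 0`, which gives the
quadratic lower bound and hence divergence as `t → ∞`; for `t ≤ 0` the threshold `-tε` is itself
nonnegative, so the integrand is at least `t²ε²` everywhere. The integrand is dominated by
`4G² + 4t²σ²N² + 2t²ε²`, which is integrable by the moment assumptions and locally uniform in `t`,
so the risk is continuous; a continuous coercive function on `ℝ` attains its infimum.
-/

noncomputable def thresholdLoss (σ ε t : ℝ) (z : ℝ × ℝ) : ℝ :=
  max (|z.1 + t * σ * z.2| - t * ε) 0 ^ 2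

noncomputable def thresholdRisk (m : Measure (ℝ × ℝ)) (σ ε t : ℝ) : ℝ :=
  ∫ z, thresholdLoss σ ε t z ∂m

lemma sq_max_abs_sub_le (u s : ℝ) : max (|u| - s) 0 ^ 2 ≤ 2 * u ^ 2 + 2 * s ^ 2 := by
  have h0 : 0 ≤ max (|u| - s) 0 := le_max_right _ _
  have h1 : max (|u| - s) 0 ≤ |u| + |s| :=
    max_le (by linarith [neg_abs_le s]) (by positivity)
  nlinarith [sq_abs u, sq_abs s, sq_nonneg (|u| - |s|)]

namespace thresholdLoss

variable {σ ε t : ℝ}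

lemma nonneg (z : ℝ × ℝ) : 0 ≤ thresholdLoss σ ε t z := sq_nonneg _

lemma continuous : Continuous (thresholdLoss σ ε t) := by
  unfold thresholdLoss; fun_prop

lemma le_of_abs_le {r : ℝ} (ht : |t| ≤ r) (z : ℝ × ℝ) :
    thresholdLoss σ ε t z ≤ 4 * z.1 ^ 2 + 4 * (r ^ 2 * σ ^ 2) * z.2 ^ 2 + 2 * (r ^ 2 * ε ^ 2) := by
  have ht2 : t ^ 2 ≤ r ^ 2 := sq_le_sq' (abs_le.mp ht).1 (abs_le.mp ht).2
  calc thresholdLoss σ ε t z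
      ≤ 2 * (z.1 + t * σ * z.2) ^ 2 + 2 * (t * ε) ^ 2 := sq_max_abs_sub_le _ _
    _ ≤ 4 * z.1 ^ 2 + 4 * (t ^ 2 * σ ^ 2) * z.2 ^ 2 + 2 * (t ^ 2 * ε ^ 2) := by
        nlinarith [sq_nonneg (z.1 - t * σ * z.2)]
    _ ≤ 4 * z.1 ^ 2 + 4 * (r ^ 2 * σ ^ 2) * z.2 ^ 2 + 2 * (r ^ 2 * ε ^ 2) := by
        gcongr

lemma sq_mul_le_of_nonneg (hε : 0 ≤ ε) (ht : 0 ≤ t) {z : ℝ × ℝ}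
    (hz : 2 * ε ≤ σ * z.2 ∧ 0 < z.1) : t ^ 2 * ε ^ 2 ≤ thresholdLoss σ ε t z := by
  have hshift : 2 * (t * ε) ≤ z.1 + t * σ * z.2 := by
    nlinarith [mul_le_mul_of_nonneg_left hz.1 ht]
  have hmax : t * ε ≤ max (|z.1 + t * σ * z.2| - t * ε) 0 :=
    le_max_of_le_left (by linarith [le_abs_self (z.1 + t * σ * z.2)])
  rw [← mul_pow]
  exact pow_le_pow_left₀ (by positivity) hmax 2

lemma sq_mul_le_of_nonpos (hε : 0 ≤ ε) (ht : t ≤ 0) (z : ℝ × ℝ) :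
    t ^ 2 * ε ^ 2 ≤ thresholdLoss σ ε t z := by
  have hmax : -(t * ε) ≤ max (|z.1 + t * σ * z.2| - t * ε) 0 :=
    le_max_of_le_left (by linarith [abs_nonneg (z.1 + t * σ * z.2)])
  rw [← mul_pow, ← neg_sq]
  exact pow_le_pow_left₀ (by nlinarith) hmax 2

end thresholdLoss

namespace thresholdRisk

variable {m : Measure (ℝ × ℝ)} [IsFiniteMeasure m]
  (hx : Integrable (fun z : ℝ × ℝ => z.1 ^ 2) m) (hy : Integrable (fun z : ℝ × ℝ => z.2 ^ 2) m)
  {σ ε : ℝ}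

include hx hy in
lemma integrable_dominant (r : ℝ) : Integrable (fun z : ℝ × ℝ =>
    4 * z.1 ^ 2 + 4 * (r ^ 2 * σ ^ 2) * z.2 ^ 2 + 2 * (r ^ 2 * ε ^ 2)) m :=
  ((hx.const_mul 4).add (hy.const_mul _)).add (integrable_const _)

include hx hy in
lemma integrable_thresholdLoss (t : ℝ) : Integrable (thresholdLoss σ ε t) m :=
  (integrable_dominant hx hy (σ := σ) (ε := ε) |t|).mono'
    thresholdLoss.continuous.aestronglyMeasurable
    (ae_of_all _ fun z => by
      rw [Real.norm_of_nonneg (thresholdLoss.nonneg z)]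
      exact thresholdLoss.le_of_abs_le le_rfl z)

include hx hy in
lemma continuous : Continuous (thresholdRisk m σ ε) := by
  rw [continuous_iff_continuousAt]
  intro t₀
  have hnear : ∀ᶠ t in 𝓝 t₀, |t| ≤ |t₀| + 1 :=
    (continuous_abs.tendsto t₀).eventually_le_const (lt_add_one _)
  refine continuousAt_of_dominated
    (Eventually.of_forall fun _ => thresholdLoss.continuous.aestronglyMeasurable)
    ?_ (integrable_dominant hx hy (σ := σ) (ε := ε) (|t₀| + 1)) (ae_of_all _ fun z => ?_)
  · filter_upwards [hnear] with t ht
    exact ae_of_all _ fun z => by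
      rw [Real.norm_of_nonneg (thresholdLoss.nonneg z)]
      exact thresholdLoss.le_of_abs_le ht z
  · exact Continuous.continuousAt (by unfold thresholdLoss; fun_prop)

include hx hy in
lemma sq_mul_measure_le_of_nonneg (hε : 0 ≤ ε) {t : ℝ} (ht : 0 ≤ t) :
    t ^ 2 * ε ^ 2 * (m {z | 2 * ε ≤ σ * z.2 ∧ 0 < z.1}).toReal ≤ thresholdRisk m σ ε t := by
  have hA : MeasurableSet {z : ℝ × ℝ | 2 * ε ≤ σ * z.2 ∧ 0 < z.1} :=
    (measurableSet_le measurable_const (measurable_const.mul measurable_snd)).inter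
      (measurableSet_lt measurable_const measurable_fst)
  calc t ^ 2 * ε ^ 2 * (m {z | 2 * ε ≤ σ * z.2 ∧ 0 < z.1}).toReal
      ≤ ∫ z in {z | 2 * ε ≤ σ * z.2 ∧ 0 < z.1}, thresholdLoss σ ε t z ∂m :=
        setIntegral_ge_of_const_le_real hA (measure_ne_top _ _)
          (fun _ hz => thresholdLoss.sq_mul_le_of_nonneg hε ht hz)
          (integrable_thresholdLoss hx hy t).integrableOn
    _ ≤ thresholdRisk m σ ε t :=
        setIntegral_le_integral (integrable_thresholdLoss hx hy t) (ae_of_all _ fun _ => sq_nonneg _)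

include hx hy in
lemma sq_mul_le_of_nonpos [IsProbabilityMeasure m] (hε : 0 ≤ ε) {t : ℝ} (ht : t ≤ 0) :
    t ^ 2 * ε ^ 2 ≤ thresholdRisk m σ ε t := by
  calc t ^ 2 * ε ^ 2 = ∫ _, t ^ 2 * ε ^ 2 ∂m := by simp
    _ ≤ thresholdRisk m σ ε t := integral_mono (integrable_const _)
        (integrable_thresholdLoss hx hy t) (thresholdLoss.sq_mul_le_of_nonpos hε ht)

include hx hy in
lemma tendsto_atTop (hε : 0 < ε) (hA : 0 < (m {z | 2 * ε ≤ σ * z.2 ∧ 0 < z.1}).toReal) :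
    Tendsto (thresholdRisk m σ ε) atTop atTop := by
  refine tendsto_atTop_mono' atTop ?_
    ((tendsto_pow_atTop two_ne_zero).atTop_mul_const (mul_pos (pow_pos hε 2) hA))
  filter_upwards [eventually_ge_atTop 0] with t ht
  rw [← mul_assoc]
  exact sq_mul_measure_le_of_nonneg hx hy hε.le ht

include hx hy in
lemma tendsto_atBot [IsProbabilityMeasure m] (hε : 0 < ε) :
    Tendsto (thresholdRisk m σ ε) atBot atTop := by
  have hsq : Tendsto (fun t : ℝ => t ^ 2 * ε ^ 2) atBot atTop :=
    by simpa only [Function.comp_def, neg_sq] using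
      ((tendsto_pow_atTop two_ne_zero).atTop_mul_const (pow_pos hε 2)).comp tendsto_neg_atBot_atTop
  refine tendsto_atTop_mono' atBot ?_ hsq
  filter_upwards [eventually_le_atBot 0] with t ht
  exact sq_mul_le_of_nonpos hx hy hε.le ht

end thresholdRisk

theorem hsvr_threshold_coercive_general
    (ν : Measure ℝ) [IsProbabilityMeasure ν]
    (hνmom : Integrable (fun x => x ^ 2) ν)
    (σ ε : ℝ) (hε : 0 < ε)
    (hpos : 0 < ν {x : ℝ | 2 * ε ≤ σ * x}) :
    (∀ t : ℝ, 0 ≤ t →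
      t ^ 2 * ε ^ 2 *
          (((gaussianReal 0 1).prod ν) {z : ℝ × ℝ | 2 * ε ≤ σ * z.2 ∧ 0 < z.1}).toReal ≤
        ∫ z : ℝ × ℝ,
          (max (|z.1 + t * σ * z.2| - t * ε) 0) ^ 2 ∂((gaussianReal 0 1).prod ν)) ∧
    Tendsto (fun t : ℝ => ∫ z : ℝ × ℝ,
        (max (|z.1 + t * σ * z.2| - t * ε) 0) ^ 2 ∂((gaussianReal 0 1).prod ν))
      atTop atTop ∧
    Tendsto (fun t : ℝ => ∫ z : ℝ × ℝ,
        (max (|z.1 + t * σ * z.2| - t * ε) 0) ^ 2 ∂((gaussianReal 0 1).prod ν))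
      atBot atTop ∧
    ∃ tstar : ℝ, ∀ t : ℝ,
      (∫ z : ℝ × ℝ,
        (max (|z.1 + tstar * σ * z.2| - tstar * ε) 0) ^ 2 ∂((gaussianReal 0 1).prod ν)) ≤
      ∫ z : ℝ × ℝ,
        (max (|z.1 + t * σ * z.2| - t * ε) 0) ^ 2 ∂((gaussianReal 0 1).prod ν) := by
  set m := (gaussianReal 0 1).prod ν
  have hx : Integrable (fun z : ℝ × ℝ => z.1 ^ 2) m :=
    (memLp_id_gaussianReal 2).integrable_sq.comp_fst ν
  have hy : Integrable (fun z : ℝ × ℝ => z.2 ^ 2) m := hνmom.comp_snd _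
  have hA : 0 < (m {z | 2 * ε ≤ σ * z.2 ∧ 0 < z.1}).toReal := by
    have := (gaussianReal_absolutelyContinuous' 0 one_ne_zero).isOpenPosMeasure
    have hprod : {z : ℝ × ℝ | 2 * ε ≤ σ * z.2 ∧ 0 < z.1} =
        Set.Ioi 0 ×ˢ {x | 2 * ε ≤ σ * x} := by
      ext z; simp [and_comm]
    refine ENNReal.toReal_pos ?_ (measure_ne_top _ _)
    rw [hprod, Measure.prod_prod]
    exact mul_ne_zero (isOpen_Ioi.measure_pos _ Set.nonempty_Ioi).ne' hpos.ne'
  have htop := thresholdRisk.tendsto_atTop hx hy hε hA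
  have hbot := thresholdRisk.tendsto_atBot hx hy (σ := σ) hε
  refine ⟨fun t ht => thresholdRisk.sq_mul_measure_le_of_nonneg hx hy hε.le ht, htop, hbot, ?_⟩
  refine (thresholdRisk.continuous hx hy).exists_forall_le ?_
  rw [cocompact_eq_atBot_atTop]
  exact hbot.sup htop

/-- **Coercivity of the threshold functional.** Let `G ∼ N(0,1)` be independent of a symmetric
`N` with `E[N²] < ∞`, `σ > 0`, `ε > 0`. If `P(σN ≥ 2ε) > 0`, then
`E[((|G + tσN| - tε)₊)²] ≥ t²ε² P(σN ≥ 2ε, G > 0)` for all `t ≥ 0`, the expectation tends to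
`∞` as `t → ±∞`, and the infimum over `t ∈ ℝ` is attained at some finite `t⋆`. -/
theorem hsvr_threshold_coercive
    (ν : Measure ℝ) [IsProbabilityMeasure ν]
    (hνsymm : ν.map (fun x => -x) = ν)
    (hνmom : Integrable (fun x => x ^ 2) ν)
    (σ ε : ℝ) (hσ : 0 < σ) (hε : 0 < ε)
    (hpos : 0 < ν {x : ℝ | 2 * ε ≤ σ * x}) :
    (∀ t : ℝ, 0 ≤ t →
      t ^ 2 * ε ^ 2 *
          (((gaussianReal 0 1).prod ν) {z : ℝ × ℝ | 2 * ε ≤ σ * z.2 ∧ 0 < z.1}).toReal ≤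
        ∫ z : ℝ × ℝ,
          (max (|z.1 + t * σ * z.2| - t * ε) 0) ^ 2 ∂((gaussianReal 0 1).prod ν)) ∧
    Tendsto (fun t : ℝ => ∫ z : ℝ × ℝ,
        (max (|z.1 + t * σ * z.2| - t * ε) 0) ^ 2 ∂((gaussianReal 0 1).prod ν))
      atTop atTop ∧
    Tendsto (fun t : ℝ => ∫ z : ℝ × ℝ,
        (max (|z.1 + t * σ * z.2| - t * ε) 0) ^ 2 ∂((gaussianReal 0 1).prod ν))
      atBot atTop ∧
    ∃ tstar : ℝ, ∀ t : ℝ,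
      (∫ z : ℝ × ℝ,
        (max (|z.1 + tstar * σ * z.2| - tstar * ε) 0) ^ 2 ∂((gaussianReal 0 1).prod ν)) ≤
      ∫ z : ℝ × ℝ,
        (max (|z.1 + t * σ * z.2| - t * ε) 0) ^ 2 ∂((gaussianReal 0 1).prod ν) :=
  hsvr_threshold_coercive_general ν hνmom σ ε hε hpos
end

section
/- Existence and uniqueness of the scalar minimizers: let G be a standard Gaussian, N independent of G with a symmetric distribution satisfying E[N²] < ∞, let σ > 0, ε ≥ 0, β > 0, δ > 0, and define D(γ̃₁, γ̃₂) = √δ · √(E[((|√(γ̃₁²+γ̃₂²)·G + N| − ε/σ)₊)²]) − γ̃₁. If the sublevel set S = {(γ̃₁, γ̃₂) ∈ ℝ² : D(γ̃₁, γ̃₂) ≤ 0} is nonempty, then S is a closed convex set and the optimization problem min over (γ̃₁, γ̃₂) ∈ S of ½(γ̃₂ − β/σ)² + ½γ̃₁² has exactly one minimizer. -/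
/-!
Write `D(γ) = √δ · ψ(‖γ‖₂) - γ₁` with `ψ(t) = ‖(|t G + N| - ε/σ)₊‖_{L²}`. For each sample the
integrand is convex in `t`, so by Minkowski `ψ` is convex; the symmetry of `G` makes `ψ` even, hence
nondecreasing on `[0, ∞)`, and `ψ ∘ ‖·‖₂` is convex. Thus `D` is convex, hence continuous, and its
sublevel set `S` is closed and convex. The objective is strictly convex and coercive, so it attains
its minimum on the nonempty closed set `S` at exactly one point.
-/

open MeasureTheory ProbabilityTheory Filter Topology Set

section LpNorm

variable {α E : Type*} [MeasurableSpace α] {μ : Measure α} [AddCommGroup E] [Module ℝ E]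

lemma sqrt_integral_sq_eq_lpNorm {f : α → ℝ} (hf : AEStronglyMeasurable f μ) :
    √(∫ x, f x ^ 2 ∂μ) = lpNorm f 2 μ := by
  rw [lpNorm_eq_integral_norm_rpow_toReal two_ne_zero ENNReal.ofNat_ne_top hf,
    Real.sqrt_eq_rpow]
  norm_num [Real.rpow_two]

lemma convexOn_lpNorm {p : ENNReal} (hp : 1 ≤ p) {s : Set E} (hs : Convex ℝ s)
    {F : E → α → ℝ} (hF0 : ∀ t ∈ s, ∀ x, 0 ≤ F t x) (hF : ∀ x, ConvexOn ℝ s (F · x))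
    (hFp : ∀ t ∈ s, MemLp (F t) p μ) :
    ConvexOn ℝ s fun t => lpNorm (F t) p μ := by
  refine ⟨hs, fun t ht t' ht' a b ha hb hab => ?_⟩
  calc lpNorm (F (a • t + b • t')) p μ ≤ lpNorm (a • F t + b • F t') p μ := by
        refine lpNorm_mono_real (((hFp t ht).const_smul a).add ((hFp t' ht').const_smul b))
          fun x => ?_
        rw [Real.norm_of_nonneg (hF0 _ (hs ht ht' ha hb hab) x)]
        exact (hF x).2 ht ht' ha hb hab
    _ ≤ lpNorm (a • F t) p μ + lpNorm (b • F t') p μ :=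
        lpNorm_add_le ((hFp t ht).const_smul a) hp
    _ = a • lpNorm (F t) p μ + b • lpNorm (F t') p μ := by
        simp [lpNorm_const_smul, Real.nnnorm_of_nonneg ha, Real.nnnorm_of_nonneg hb]

end LpNorm

section Convexity

variable {E : Type*} [AddCommGroup E] [Module ℝ E]

lemma ConvexOn.monotoneOn_Ici_of_even {f : ℝ → ℝ} (hf : ConvexOn ℝ univ f)
    (heven : ∀ x, f (-x) = f x) : MonotoneOn f (Ici 0) := by
  intro a ha b _ hab
  have := hf.le_max_of_mem_Icc (mem_univ (-b)) (mem_univ b) ⟨by linarith [mem_Ici.1 ha], hab⟩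
  rwa [heven, max_self] at this

lemma ConvexOn.comp_of_mapsTo {s : Set E} {t : Set ℝ} {f : E → ℝ} {g : ℝ → ℝ}
    (hg : ConvexOn ℝ t g) (hg' : MonotoneOn g t) (hf : ConvexOn ℝ s f) (hst : MapsTo f s t) :
    ConvexOn ℝ s (g ∘ f) :=
  ⟨hf.1, fun _ hx _ hy _ _ ha hb hab =>
    (hg' (hst (hf.1 hx hy ha hb hab)) (hg.1 (hst hx) (hst hy) ha hb hab)
      (hf.2 hx hy ha hb hab)).trans (hg.2 (hst hx) (hst hy) ha hb hab)⟩

lemma convexOn_sqrt_fst_sq_add_snd_sq :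
    ConvexOn ℝ univ fun x : ℝ × ℝ => √(x.1 ^ 2 + x.2 ^ 2) := by
  have := (convexOn_norm convex_univ).comp_linearMap
    (WithLp.linearEquiv 2 ℝ (ℝ × ℝ)).symm.toLinearMap
  simpa [Function.comp_def, WithLp.prod_norm_eq_of_L2] using this

end Convexity

theorem StrictConvexOn.existsUnique_isMinOn {E : Type*} [TopologicalSpace E] [AddCommGroup E]
    [Module ℝ E] {s : Set E} {f : E → ℝ} (hf : StrictConvexOn ℝ s f) (hfc : ContinuousOn f s)
    (hs : IsClosed s) (hne : s.Nonempty) (hlim : Tendsto f (cocompact E) atTop) :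
    ∃! x, x ∈ s ∧ IsMinOn f s x := by
  obtain ⟨x₀, hx₀⟩ := hne
  obtain ⟨x, hx, hmin⟩ := hfc.exists_isMinOn' hs hx₀
    ((hlim.eventually (eventually_ge_atTop (f x₀))).filter_mono inf_le_left)
  exact ⟨x, ⟨hx, hmin⟩, fun y ⟨hy, hymin⟩ => hf.eq_of_isMinOn hymin hmin hy hx⟩

lemma strictConvexOn_half_sq_add_half_sq (c : ℝ) :
    StrictConvexOn ℝ univ fun x : ℝ × ℝ => 1 / 2 * (x.2 - c) ^ 2 + 1 / 2 * x.1 ^ 2 := by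
  refine ⟨convex_univ, fun x _ y _ hxy a b ha hb hab => ?_⟩
  obtain rfl : b = 1 - a := by linarith
  have hgap : 0 < (x.1 - y.1) ^ 2 + (x.2 - y.2) ^ 2 := by
    rcases eq_or_ne x.1 y.1 with h1 | h1
    · have := sub_ne_zero.2 fun h2 => hxy (Prod.ext h1 h2)
      positivity
    · have := sub_ne_zero.2 h1
      positivity
  simp only [Prod.fst_add, Prod.snd_add, Prod.smul_fst, Prod.smul_snd, smul_eq_mul]
  nlinarith [mul_pos (mul_pos ha hb) hgap]

lemma tendsto_half_sq_add_half_sq_cocompact (c : ℝ) :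
    Tendsto (fun x : ℝ × ℝ => 1 / 2 * (x.2 - c) ^ 2 + 1 / 2 * x.1 ^ 2) (cocompact _) atTop := by
  refine tendsto_atTop_mono (fun x => ?_)
    (tendsto_atTop_add_const_right _ (-(|c| + 1)) tendsto_norm_cocompact_atTop)
  have h1 : |x.2| - |c| ≤ |x.2 - c| := abs_sub_abs_le_abs_sub _ _
  have h2 : |x.2 - c| - 1 / 2 ≤ 1 / 2 * (x.2 - c) ^ 2 := by
    nlinarith [sq_abs (x.2 - c), sq_nonneg (|x.2 - c| - 1)]
  have h3 : |x.1| - 1 / 2 ≤ 1 / 2 * x.1 ^ 2 := by nlinarith [sq_abs x.1, sq_nonneg (|x.1| - 1)]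
  have h4 : ‖x‖ ≤ |x.1| + |x.2| := by
    rw [Prod.norm_def, Real.norm_eq_abs, Real.norm_eq_abs]
    exact max_le (by linarith [abs_nonneg x.2]) (by linarith [abs_nonneg x.1])
  linarith

section Threshold

variable (μ : Measure (ℝ × ℝ)) (c : ℝ)

noncomputable def thresholdNorm (t : ℝ) : ℝ :=
  lpNorm (fun z : ℝ × ℝ => max (|t * z.1 + z.2| - c) 0) 2 μ

variable {μ}

lemma convexOn_max_abs_mul_add_sub (z : ℝ × ℝ) :
    ConvexOn ℝ univ fun t : ℝ => max (|t * z.1 + z.2| - c) 0 := by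
  refine ⟨convex_univ, fun t _ t' _ a b ha hb hab => ?_⟩
  simp only [smul_eq_mul]
  refine max_le ?_ (by positivity)
  have hsplit : (a * t + b * t') * z.1 + z.2 = a * (t * z.1 + z.2) + b * (t' * z.1 + z.2) := by
    linear_combination -z.2 * hab
  calc |(a * t + b * t') * z.1 + z.2| - c
      ≤ a * (|t * z.1 + z.2| - c) + b * (|t' * z.1 + z.2| - c) := by
        rw [hsplit]
        have := abs_add_le (a * (t * z.1 + z.2)) (b * (t' * z.1 + z.2))
        rw [abs_mul, abs_mul, abs_of_nonneg ha, abs_of_nonneg hb] at this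
        linear_combination this + c * hab
    _ ≤ a * max (|t * z.1 + z.2| - c) 0 + b * max (|t' * z.1 + z.2| - c) 0 := by
        gcongr <;> exact le_max_left _ _

lemma memLp_max_abs_mul_add_sub [IsFiniteMeasure μ] (h₁ : MemLp Prod.fst 2 μ)
    (h₂ : MemLp Prod.snd 2 μ) (t : ℝ) : MemLp (fun z : ℝ × ℝ => max (|t * z.1 + z.2| - c) 0) 2 μ := by
  have hlin : MemLp (fun z : ℝ × ℝ => t * z.1 + z.2) 2 μ := (h₁.const_mul t).add h₂
  refine (hlin.norm.add (memLp_const |c|)).mono' ?_ (ae_of_all _ fun z => ?_)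
  · exact (by fun_prop : Continuous fun u : ℝ => max (|u| - c) 0).comp_aestronglyMeasurable
      hlin.aestronglyMeasurable
  · simp only [Pi.add_apply, Real.norm_eq_abs]
    rw [abs_of_nonneg (le_max_right _ _)]
    exact max_le (by linarith [neg_abs_le c]) (by positivity)

lemma convexOn_thresholdNorm [IsFiniteMeasure μ] (h₁ : MemLp Prod.fst 2 μ)
    (h₂ : MemLp Prod.snd 2 μ) : ConvexOn ℝ univ (thresholdNorm μ c) :=
  convexOn_lpNorm one_le_two convex_univ (fun _ _ _ => le_max_right _ _)
    (convexOn_max_abs_mul_add_sub c) fun t _ => memLp_max_abs_mul_add_sub c h₁ h₂ t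

lemma thresholdNorm_neg (hμ : MeasurePreserving (fun z : ℝ × ℝ => (-z.1, z.2)) μ μ) (t : ℝ) :
    thresholdNorm μ c (-t) = thresholdNorm μ c t := by
  have hcomp : (fun z : ℝ × ℝ => max (|-t * z.1 + z.2| - c) 0)
      = (fun z : ℝ × ℝ => max (|t * z.1 + z.2| - c) 0) ∘ fun z => (-z.1, z.2) := by
    funext z; simp
  rw [thresholdNorm, thresholdNorm, hcomp, ← toReal_eLpNorm (by fun_prop),
    ← toReal_eLpNorm (by fun_prop), eLpNorm_comp_measurePreserving (by fun_prop) hμ]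

lemma convexOn_thresholdNorm_sqrt_sq_add_sq [IsFiniteMeasure μ] (h₁ : MemLp Prod.fst 2 μ)
    (h₂ : MemLp Prod.snd 2 μ) (hμ : MeasurePreserving (fun z : ℝ × ℝ => (-z.1, z.2)) μ μ) :
    ConvexOn ℝ univ fun x : ℝ × ℝ => thresholdNorm μ c √(x.1 ^ 2 + x.2 ^ 2) :=
  have hconv := convexOn_thresholdNorm c h₁ h₂
  (hconv.subset (subset_univ _) (convex_Ici 0)).comp_of_mapsTo
    (hconv.monotoneOn_Ici_of_even (thresholdNorm_neg c hμ)) convexOn_sqrt_fst_sq_add_snd_sq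
    fun _ _ => Real.sqrt_nonneg _

end Threshold

lemma measurePreserving_neg_fst_gaussianReal_prod (v : NNReal) (ν : Measure ℝ) [SFinite ν] :
    MeasurePreserving (fun z : ℝ × ℝ => (-z.1, z.2))
      ((gaussianReal 0 v).prod ν) ((gaussianReal 0 v).prod ν) :=
  MeasurePreserving.prod ⟨measurable_neg, by simp [gaussianReal_map_neg]⟩ (.id ν)

theorem hsvr_scalar_problem_unique_minimizer_general
    (ν : Measure ℝ) [IsProbabilityMeasure ν]
    (hνmom : Integrable (fun x => x ^ 2) ν)
    (σ ε β δ : ℝ)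
    (D : ℝ × ℝ → ℝ)
    (hD : D = fun g => Real.sqrt δ * Real.sqrt (∫ z : ℝ × ℝ,
        (max (|Real.sqrt (g.1 ^ 2 + g.2 ^ 2) * z.1 + z.2| - ε / σ) 0) ^ 2
          ∂((gaussianReal 0 1).prod ν)) - g.1)
    (hne : {g : ℝ × ℝ | D g ≤ 0}.Nonempty) :
    IsClosed {g : ℝ × ℝ | D g ≤ 0} ∧
    Convex ℝ {g : ℝ × ℝ | D g ≤ 0} ∧
    (∃! g : ℝ × ℝ, D g ≤ 0 ∧ ∀ g' : ℝ × ℝ, D g' ≤ 0 →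
      (1 / 2) * (g.2 - β / σ) ^ 2 + (1 / 2) * g.1 ^ 2 ≤
      (1 / 2) * (g'.2 - β / σ) ^ 2 + (1 / 2) * g'.1 ^ 2) := by
  set μ := (gaussianReal 0 1).prod ν
  have h₁ : MemLp Prod.fst 2 μ := by
    simpa using (memLp_id_gaussianReal 2).comp_measurePreserving measurePreserving_fst
  have h₂ : MemLp Prod.snd 2 μ :=
    ((memLp_two_iff_integrable_sq aestronglyMeasurable_id).2 hνmom).comp_measurePreserving
      measurePreserving_snd
  have hDconv : ConvexOn ℝ univ D := by
    have hD' : D = fun g => √δ * thresholdNorm μ (ε / σ) √(g.1 ^ 2 + g.2 ^ 2) - g.1 := by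
      rw [hD]; funext g; rw [thresholdNorm, ← sqrt_integral_sq_eq_lpNorm (by fun_prop)]
    rw [hD']
    exact ((convexOn_thresholdNorm_sqrt_sq_add_sq (ε / σ) h₁ h₂
      (measurePreserving_neg_fst_gaussianReal_prod 1 ν)).smul (Real.sqrt_nonneg δ)).sub
      ((LinearMap.fst ℝ ℝ ℝ).concaveOn convex_univ)
  have hSclosed : IsClosed {g : ℝ × ℝ | D g ≤ 0} :=
    isClosed_le (continuousOn_univ.1 (hDconv.continuousOn isOpen_univ)) continuous_const
  have hSconv : Convex ℝ {g : ℝ × ℝ | D g ≤ 0} := by simpa using hDconv.convex_le 0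
  refine ⟨hSclosed, hSconv, ?_⟩
  simpa [isMinOn_iff] using ((strictConvexOn_half_sq_add_half_sq (β / σ)).subset
    (subset_univ _) hSconv).existsUnique_isMinOn (by fun_prop) hSclosed hne
    (tendsto_half_sq_add_half_sq_cocompact _)

/-- **Existence and uniqueness of the scalar minimizers.** With
`D(γ̃₁, γ̃₂) = √δ √(E[((|√(γ̃₁²+γ̃₂²)G + N| - ε/σ)₊)²]) - γ̃₁`, if the sublevel set
`S = {(γ̃₁, γ̃₂) : D(γ̃₁, γ̃₂) ≤ 0}` is nonempty then `S` is closed and convex and the problem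
`min_{(γ̃₁,γ̃₂) ∈ S} ½(γ̃₂ - β/σ)² + ½γ̃₁²` has exactly one minimizer. -/
theorem hsvr_scalar_problem_unique_minimizer
    (ν : Measure ℝ) [IsProbabilityMeasure ν]
    (hνsymm : ν.map (fun x => -x) = ν)
    (hνmom : Integrable (fun x => x ^ 2) ν)
    (σ ε β δ : ℝ) (hσ : 0 < σ) (hε : 0 ≤ ε) (hβ : 0 < β) (hδ : 0 < δ)
    (D : ℝ × ℝ → ℝ)
    (hD : D = fun g => Real.sqrt δ * Real.sqrt (∫ z : ℝ × ℝ,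
        (max (|Real.sqrt (g.1 ^ 2 + g.2 ^ 2) * z.1 + z.2| - ε / σ) 0) ^ 2
          ∂((gaussianReal 0 1).prod ν)) - g.1)
    (hne : {g : ℝ × ℝ | D g ≤ 0}.Nonempty) :
    IsClosed {g : ℝ × ℝ | D g ≤ 0} ∧
    Convex ℝ {g : ℝ × ℝ | D g ≤ 0} ∧
    (∃! g : ℝ × ℝ, D g ≤ 0 ∧ ∀ g' : ℝ × ℝ, D g' ≤ 0 →
      (1 / 2) * (g.2 - β / σ) ^ 2 + (1 / 2) * g.1 ^ 2 ≤
      (1 / 2) * (g'.2 - β / σ) ^ 2 + (1 / 2) * g'.1 ^ 2) :=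
  hsvr_scalar_problem_unique_minimizer_general ν hνmom σ ε β δ D hD hne
end

section
/- Hard SVR limiting risk at vanishing sample ratio: let G be a standard Gaussian, N independent of G with a symmetric distribution satisfying E[N²] < ∞, let σ > 0, ε ≥ 0, β > 0, and define D_δ(γ̃₁, γ̃₂) = √δ · √(E[((|√(γ̃₁²+γ̃₂²)·G + N| − ε/σ)₊)²]) − γ̃₁. For all sufficiently small δ > 0 the set {D_δ ≤ 0} is nonempty, and the unique minimizer (γ̃₁⋆(δ), γ̃₂⋆(δ)) of ½(γ̃₂ − β/σ)² + ½γ̃₁² over {(γ̃₁, γ̃₂) : D_δ(γ̃₁, γ̃₂) ≤ 0} satisfies γ̃₁⋆(δ) → 0 and γ̃₂⋆(δ) → β/σ as δ → 0⁺; consequently the asymptotic risk σ²((γ̃₁⋆(δ))² + (γ̃₂⋆(δ))²) converges to β², the risk of the null estimator. -/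
/-!
The hinge residual `(|r G + N| - ε/σ)₊` is dominated by `|r G| + |N|`, so its second moment is at
most `2 r² + 2 E[N²]`. Hence `(√(δ L), β/σ)` with `L = 4 (β/σ)² + 4 E[N²]` is feasible for
`δ < 1/4`, and comparing objectives with it gives `γ̃₁⋆² + (γ̃₂⋆ - β/σ)² ≤ δ L → 0`.
-/

open MeasureTheory ProbabilityTheory Filter Topology

lemma integral_sq_gaussianReal_zero (v : NNReal) : ∫ x, x ^ 2 ∂gaussianReal 0 v = v := by
  have h := variance_eq_integral (X := id) (μ := gaussianReal 0 v) measurable_id.aemeasurable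
  simpa [variance_id_gaussianReal, integral_id_gaussianReal] using h.symm

lemma integrable_sq_gaussianReal (μ : ℝ) (v : NNReal) :
    Integrable (fun x => x ^ 2) (gaussianReal μ v) :=
  (memLp_id_gaussianReal 2).integrable_sq

lemma sq_max_abs_add_sub_le {c : ℝ} (hc : 0 ≤ c) (a b : ℝ) :
    max (|a + b| - c) 0 ^ 2 ≤ 2 * a ^ 2 + 2 * b ^ 2 := by
  have h0 : 0 ≤ max (|a + b| - c) 0 := le_max_right _ _
  have h1 : max (|a + b| - c) 0 ≤ |a| + |b| :=
    max_le (by linarith [abs_add_le a b]) (by positivity)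
  nlinarith [sq_nonneg (|a| - |b|), sq_abs a, sq_abs b]

lemma integral_sq_max_abs_add_sub_le {μ ν : Measure ℝ} [IsProbabilityMeasure μ]
    [IsProbabilityMeasure ν] (hμ : Integrable (fun x => x ^ 2) μ)
    (hν : Integrable (fun x => x ^ 2) ν) {c : ℝ} (hc : 0 ≤ c) (r : ℝ) :
    ∫ z : ℝ × ℝ, max (|r * z.1 + z.2| - c) 0 ^ 2 ∂(μ.prod ν) ≤
      2 * r ^ 2 * ∫ x, x ^ 2 ∂μ + 2 * ∫ y, y ^ 2 ∂ν := by
  have hint : Integrable (fun z : ℝ × ℝ => 2 * r ^ 2 * z.1 ^ 2 + 2 * z.2 ^ 2) (μ.prod ν) :=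
    ((hμ.comp_fst ν).const_mul _).add ((hν.comp_snd μ).const_mul _)
  calc ∫ z : ℝ × ℝ, max (|r * z.1 + z.2| - c) 0 ^ 2 ∂(μ.prod ν)
      ≤ ∫ z : ℝ × ℝ, 2 * r ^ 2 * z.1 ^ 2 + 2 * z.2 ^ 2 ∂(μ.prod ν) :=
        integral_mono_of_nonneg (ae_of_all _ fun z => by positivity) hint
          (ae_of_all _ fun z => by
            simpa [mul_pow, mul_assoc] using sq_max_abs_add_sub_le hc (r * z.1) z.2)
    _ = 2 * r ^ 2 * ∫ x, x ^ 2 ∂μ + 2 * ∫ y, y ^ 2 ∂ν := by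
        rw [integral_add ((hμ.comp_fst ν).const_mul _) ((hν.comp_snd μ).const_mul _),
          integral_const_mul, integral_const_mul, integral_fun_fst (fun x => x ^ 2),
          integral_fun_snd (fun y => y ^ 2)]
        simp

lemma tendsto_zero_of_sq_le_mul {u : ℝ → ℝ} {L : ℝ}
    (h : ∀ᶠ δ in 𝓝[>] 0, u δ ^ 2 ≤ δ * L) : Tendsto u (𝓝[>] 0) (𝓝 0) := by
  have hbound : Tendsto (fun δ => √(δ * L)) (𝓝[>] 0) (𝓝 0) := by
    simpa using ((continuous_id.mul continuous_const).sqrt.tendsto 0).mono_left nhdsWithin_le_nhds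
  exact squeeze_zero_norm' (h.mono fun δ hδ => Real.abs_le_sqrt hδ) hbound

noncomputable def hingeMoment (ν : Measure ℝ) (c r : ℝ) : ℝ :=
  ∫ z : ℝ × ℝ, max (|r * z.1 + z.2| - c) 0 ^ 2 ∂((gaussianReal 0 1).prod ν)

section hingeMoment

variable {ν : Measure ℝ} [IsProbabilityMeasure ν] {c : ℝ}

lemma hingeMoment_le (hν : Integrable (fun x => x ^ 2) ν) (hc : 0 ≤ c) (r : ℝ) :
    hingeMoment ν c r ≤ 2 * r ^ 2 + 2 * ∫ y, y ^ 2 ∂ν := by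
  have h := integral_sq_max_abs_add_sub_le (integrable_sq_gaussianReal 0 1) hν hc r
  rwa [integral_sq_gaussianReal_zero, NNReal.coe_one, mul_one] at h

lemma sqrt_mul_sqrt_hingeMoment_sub_nonpos (hν : Integrable (fun x => x ^ 2) ν) (hc : 0 ≤ c)
    {b δ L : ℝ} (hδ : 0 ≤ δ) (hδ' : δ ≤ 1 / 4) (hL : 4 * b ^ 2 + 4 * ∫ y, y ^ 2 ∂ν ≤ L) :
    √δ * √(hingeMoment ν c √(√(δ * L) ^ 2 + b ^ 2)) - √(δ * L) ≤ 0 := by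
  have hL₀ : 0 ≤ L := le_trans (by positivity) hL
  rw [Real.sq_sqrt (mul_nonneg hδ hL₀)]
  have hmoment := hingeMoment_le hν hc √(δ * L + b ^ 2)
  rw [Real.sq_sqrt (by positivity)] at hmoment
  have hle : hingeMoment ν c √(δ * L + b ^ 2) ≤ L := by
    nlinarith [mul_le_mul_of_nonneg_right hδ' hL₀]
  rw [Real.sqrt_mul hδ]
  exact sub_nonpos.mpr (mul_le_mul_of_nonneg_left (Real.sqrt_le_sqrt hle) (Real.sqrt_nonneg δ))

end hingeMoment

theorem hsvr_risk_vanishing_sample_ratio_general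
    (ν : Measure ℝ) [IsProbabilityMeasure ν]
    (hνmom : Integrable (fun x => x ^ 2) ν)
    (σ ε β : ℝ) (hσ : 0 < σ) (hε : 0 ≤ ε)
    (D : ℝ → ℝ × ℝ → ℝ)
    (hD : D = fun δ g => Real.sqrt δ * Real.sqrt (∫ z : ℝ × ℝ,
        (max (|Real.sqrt (g.1 ^ 2 + g.2 ^ 2) * z.1 + z.2| - ε / σ) 0) ^ 2
          ∂((gaussianReal 0 1).prod ν)) - g.1) :
    ∃ δ₀ : ℝ, 0 < δ₀ ∧
      (∀ δ ∈ Set.Ioo (0 : ℝ) δ₀, {g : ℝ × ℝ | D δ g ≤ 0}.Nonempty) ∧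
      ∀ γsel : ℝ → ℝ × ℝ,
        (∀ δ ∈ Set.Ioo (0 : ℝ) δ₀, D δ (γsel δ) ≤ 0 ∧
          ∀ g : ℝ × ℝ, D δ g ≤ 0 →
            (1 / 2) * ((γsel δ).2 - β / σ) ^ 2 + (1 / 2) * (γsel δ).1 ^ 2 ≤
            (1 / 2) * (g.2 - β / σ) ^ 2 + (1 / 2) * g.1 ^ 2) →
        Tendsto (fun δ => (γsel δ).1) (𝓝[>] 0) (𝓝 0) ∧
        Tendsto (fun δ => (γsel δ).2) (𝓝[>] 0) (𝓝 (β / σ)) ∧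
        Tendsto (fun δ => σ ^ 2 * ((γsel δ).1 ^ 2 + (γsel δ).2 ^ 2)) (𝓝[>] 0)
          (𝓝 (β ^ 2)) := by
  set b := β / σ
  set L := 4 * b ^ 2 + 4 * ∫ y, y ^ 2 ∂ν
  have hL : 0 ≤ L := by positivity
  have hfeas : ∀ δ ∈ Set.Ioo (0 : ℝ) (1 / 4), D δ (√(δ * L), b) ≤ 0 := fun δ hδ => by
    subst hD
    exact sqrt_mul_sqrt_hingeMoment_sub_nonpos hνmom (div_nonneg hε hσ.le) hδ.1.le hδ.2.le le_rfl
  refine ⟨1 / 4, by norm_num, fun δ hδ => ⟨_, hfeas δ hδ⟩, fun γ hγ => ?_⟩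
  have hclose : ∀ᶠ δ in 𝓝[>] 0, (γ δ).1 ^ 2 + ((γ δ).2 - b) ^ 2 ≤ δ * L := by
    filter_upwards [Ioo_mem_nhdsGT (by norm_num : (0 : ℝ) < 1 / 4)] with δ hδ
    have h := (hγ δ hδ).2 _ (hfeas δ hδ)
    rw [Real.sq_sqrt (mul_nonneg hδ.1.le hL)] at h
    linarith
  have h1 : Tendsto (fun δ => (γ δ).1) (𝓝[>] 0) (𝓝 0) :=
    tendsto_zero_of_sq_le_mul (hclose.mono fun δ h => by nlinarith [sq_nonneg ((γ δ).2 - b)])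
  have h2 : Tendsto (fun δ => (γ δ).2 - b) (𝓝[>] 0) (𝓝 0) :=
    tendsto_zero_of_sq_le_mul (hclose.mono fun δ h => by nlinarith [sq_nonneg (γ δ).1])
  replace h2 : Tendsto (fun δ => (γ δ).2) (𝓝[>] 0) (𝓝 b) := by simpa using h2.add_const b
  refine ⟨h1, h2, ?_⟩
  convert ((h1.pow 2).add (h2.pow 2)).const_mul (σ ^ 2) using 2
  simp only [b]
  field_simp
  ring

/-- **Hard SVR limiting risk at vanishing sample ratio.** With
`D_δ(γ̃₁, γ̃₂) = √δ √(E[((|√(γ̃₁²+γ̃₂²)G + N| - ε/σ)₊)²]) - γ̃₁`, for all sufficiently small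
`δ > 0` the set `{D_δ ≤ 0}` is nonempty, and any selection `γ⋆(δ)` of the minimizer of
`½(γ̃₂ - β/σ)² + ½γ̃₁²` over `{D_δ ≤ 0}` satisfies `γ̃₁⋆(δ) → 0`, `γ̃₂⋆(δ) → β/σ` as
`δ → 0⁺`; consequently the asymptotic risk `σ²(γ̃₁⋆(δ)² + γ̃₂⋆(δ)²)` converges to `β²`. -/
theorem hsvr_risk_vanishing_sample_ratio
    (ν : Measure ℝ) [IsProbabilityMeasure ν]
    (hνsymm : ν.map (fun x => -x) = ν)
    (hνmom : Integrable (fun x => x ^ 2) ν)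
    (σ ε β : ℝ) (hσ : 0 < σ) (hε : 0 ≤ ε) (hβ : 0 < β)
    (D : ℝ → ℝ × ℝ → ℝ)
    (hD : D = fun δ g => Real.sqrt δ * Real.sqrt (∫ z : ℝ × ℝ,
        (max (|Real.sqrt (g.1 ^ 2 + g.2 ^ 2) * z.1 + z.2| - ε / σ) 0) ^ 2
          ∂((gaussianReal 0 1).prod ν)) - g.1) :
    ∃ δ₀ : ℝ, 0 < δ₀ ∧
      (∀ δ ∈ Set.Ioo (0 : ℝ) δ₀, {g : ℝ × ℝ | D δ g ≤ 0}.Nonempty) ∧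
      ∀ γsel : ℝ → ℝ × ℝ,
        (∀ δ ∈ Set.Ioo (0 : ℝ) δ₀, D δ (γsel δ) ≤ 0 ∧
          ∀ g : ℝ × ℝ, D δ g ≤ 0 →
            (1 / 2) * ((γsel δ).2 - β / σ) ^ 2 + (1 / 2) * (γsel δ).1 ^ 2 ≤
            (1 / 2) * (g.2 - β / σ) ^ 2 + (1 / 2) * g.1 ^ 2) →
        Tendsto (fun δ => (γsel δ).1) (𝓝[>] 0) (𝓝 0) ∧
        Tendsto (fun δ => (γsel δ).2) (𝓝[>] 0) (𝓝 (β / σ)) ∧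
        Tendsto (fun δ => σ ^ 2 * ((γsel δ).1 ^ 2 + (γsel δ).2 ^ 2)) (𝓝[>] 0)
          (𝓝 (β ^ 2)) :=
  hsvr_risk_vanishing_sample_ratio_general ν hνmom σ ε β hσ hε D hD
end

section
/- Soft SVR limiting objective at vanishing sample ratio: let G be a standard Gaussian, N independent of G with a symmetric distribution satisfying E[N²] < ∞, let σ > 0, ε ≥ 0, C > 0, β > 0, and for δ > 0 define D̄_δ(γ̃₁, γ̃₂, χ) = (δ/σ)·E[ C·((|√(γ̃₁²+γ̃₂²)·G + N| − ε/σ)₊ − Cγ̃₁/(2χ))·1{(|√(γ̃₁²+γ̃₂²)·G + N| − ε/σ)₊·χ > γ̃₁C} + (χ/(2γ̃₁))·((|√(γ̃₁²+γ̃₂²)·G + N| − ε/σ)₊)²·1{(|√(γ̃₁²+γ̃₂²)·G + N| − ε/σ)₊·χ ≤ γ̃₁C} ] − γ̃₁χ/(2σ) + ½γ̃₁² + ½(γ̃₂ − β/σ)². Then for every fixed γ̃₁ > 0 and γ̃₂ ∈ ℝ, lim_{δ→0⁺} sup_{χ>0} D̄_δ(γ̃₁, γ̃₂, χ) = ½γ̃₁²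 + ½(γ̃₂ − β/σ)². -/
open MeasureTheory ProbabilityTheory Filter Topology

lemma gauss_abs_integrable : Integrable (fun x : ℝ => |x|) (gaussianReal 0 1) := by
  rw [gaussianReal_of_var_ne_zero 0 one_ne_zero]
  rw [integrable_withDensity_iff (measurable_gaussianPDF 0 1)
    (Filter.Eventually.of_forall fun x => ENNReal.ofReal_lt_top)]
  have h : Integrable
      (fun x : ℝ => (Real.sqrt (2 * Real.pi))⁻¹ * |x * Real.exp (-(1/2) * x ^ 2)|) volume :=
    ((integrable_mul_exp_neg_mul_sq (by norm_num : (0:ℝ) < 1/2)).abs.const_mul _)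
  refine h.congr (Filter.Eventually.of_forall fun x => ?_)
  show _ = |x| * (gaussianPDF 0 1 x).toReal
  rw [show gaussianPDF 0 1 x = ENNReal.ofReal (gaussianPDFReal 0 1 x) from rfl,
    ENNReal.toReal_ofReal (gaussianPDFReal_nonneg 0 1 x), gaussianPDFReal_def]
  simp only [abs_mul, Real.abs_exp]
  push_cast
  ring_nf

lemma ssvr_ebound (C γ1 χ m : ℝ) (hC : 0 < C) (hγ1 : 0 < γ1) (hχ : 0 < χ) (hm : 0 ≤ m) :
    0 ≤ C * (m - C * γ1 / (2 * χ)) * (if m * χ > γ1 * C then (1:ℝ) else 0) +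
        (χ / (2 * γ1)) * m ^ 2 * (if m * χ ≤ γ1 * C then (1:ℝ) else 0) ∧
    C * (m - C * γ1 / (2 * χ)) * (if m * χ > γ1 * C then (1:ℝ) else 0) +
        (χ / (2 * γ1)) * m ^ 2 * (if m * χ ≤ γ1 * C then (1:ℝ) else 0) ≤ C * m := by
  by_cases h : m * χ ≤ γ1 * C
  · rw [if_neg (not_lt.2 h), if_pos h]
    simp only [mul_zero, mul_one, zero_add]
    constructor
    · positivity
    · rw [div_mul_eq_mul_div, div_le_iff₀ (by positivity : (0:ℝ) < 2 * γ1)]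
      nlinarith [mul_le_mul_of_nonneg_left h hm, mul_nonneg (mul_nonneg hγ1.le hC.le) hm]
  · rw [if_pos (not_le.1 h), if_neg h]
    simp only [mul_zero, mul_one, add_zero]
    have h2 : C * γ1 / (2 * χ) < m := by
      rw [div_lt_iff₀ (by positivity : (0:ℝ) < 2 * χ)]
      nlinarith [not_le.1 h]
    constructor
    · exact mul_nonneg hC.le (by linarith)
    · have h3 : (0:ℝ) ≤ C * γ1 / (2 * χ) := by positivity
      nlinarith

/-- **Soft SVR limiting objective at vanishing sample ratio.** With `D̄_δ(γ̃₁, γ̃₂, χ)` as in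
Theorem 3 of the paper, for every fixed `γ̃₁ > 0` and `γ̃₂ ∈ ℝ`,
`sup_{χ>0} D̄_δ(γ̃₁, γ̃₂, χ) → ½γ̃₁² + ½(γ̃₂ - β/σ)²` as `δ → 0⁺`. -/
theorem ssvr_limit_objective_vanishing_sample_ratio
    (ν : Measure ℝ) [IsProbabilityMeasure ν]
    (hνsymm : ν.map (fun x => -x) = ν)
    (hνmom : Integrable (fun x => x ^ 2) ν)
    (σ ε C β : ℝ) (hσ : 0 < σ) (hε : 0 ≤ ε) (hC : 0 < C) (hβ : 0 < β)
    (Dbar : ℝ → ℝ → ℝ → ℝ → ℝ)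
    (hDbar : Dbar = fun δ g1 g2 χ =>
      (δ / σ) * (∫ z : ℝ × ℝ,
        (C * ((max (|Real.sqrt (g1 ^ 2 + g2 ^ 2) * z.1 + z.2| - ε / σ) 0) - C * g1 / (2 * χ)) *
            (if (max (|Real.sqrt (g1 ^ 2 + g2 ^ 2) * z.1 + z.2| - ε / σ) 0) * χ > g1 * C
              then (1 : ℝ) else 0) +
          (χ / (2 * g1)) * (max (|Real.sqrt (g1 ^ 2 + g2 ^ 2) * z.1 + z.2| - ε / σ) 0) ^ 2 *
            (if (max (|Real.sqrt (g1 ^ 2 + g2 ^ 2) * z.1 + z.2| - ε / σ) 0) * χ ≤ g1 * C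
              then (1 : ℝ) else 0)) ∂((gaussianReal 0 1).prod ν))
        - g1 * χ / (2 * σ) + (1 / 2) * g1 ^ 2 + (1 / 2) * (g2 - β / σ) ^ 2)
    (γ1 γ2 : ℝ) (hγ1 : 0 < γ1) :
    Tendsto (fun δ : ℝ => ⨆ χ : {c : ℝ // 0 < c}, Dbar δ γ1 γ2 (χ : ℝ))
      (𝓝[>] 0) (𝓝 ((1 / 2) * γ1 ^ 2 + (1 / 2) * (γ2 - β / σ) ^ 2)) := by
  haveI : Nonempty {c : ℝ // 0 < c} := ⟨⟨1, one_pos⟩⟩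
  set cst : ℝ := (1 / 2) * γ1 ^ 2 + (1 / 2) * (γ2 - β / σ) ^ 2 with hcst
  set a : ℝ := Real.sqrt (γ1 ^ 2 + γ2 ^ 2) with ha
  -- integrable dominating function
  have hνabs : Integrable (fun x : ℝ => |x|) ν := by
    refine (hνmom.add (integrable_const 1)).mono' continuous_abs.aestronglyMeasurable ?_
    filter_upwards with x
    rw [Real.norm_eq_abs, abs_abs]
    simp only [Pi.add_apply]
    nlinarith [sq_abs x, sq_nonneg (|x| - 1)]
  have hdom : Integrable (fun z : ℝ × ℝ => C * (|a| * |z.1| + |z.2|))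
      ((gaussianReal 0 1).prod ν) := by
    have h1 : Integrable (fun z : ℝ × ℝ => |z.1| * (1:ℝ)) ((gaussianReal 0 1).prod ν) :=
      gauss_abs_integrable.mul_prod (integrable_const 1)
    have h2 : Integrable (fun z : ℝ × ℝ => (1:ℝ) * |z.2|) ((gaussianReal 0 1).prod ν) :=
      (integrable_const 1).mul_prod hνabs
    simp only [mul_one, one_mul] at h1 h2
    exact ((h1.const_mul |a|).add h2).const_mul C
  have hMle : ∀ z : ℝ × ℝ, max (|a * z.1 + z.2| - ε / σ) 0 ≤ |a| * |z.1| + |z.2| := by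
    intro z
    have h1 : |a * z.1 + z.2| ≤ |a| * |z.1| + |z.2| := by
      calc |a * z.1 + z.2| ≤ |a * z.1| + |z.2| := abs_add_le _ _
        _ = |a| * |z.1| + |z.2| := by rw [abs_mul]
    have hεσ : 0 ≤ ε / σ := div_nonneg hε hσ.le
    exact max_le (by linarith) (by positivity)
  set K : ℝ := ∫ z : ℝ × ℝ, C * (|a| * |z.1| + |z.2|) ∂((gaussianReal 0 1).prod ν) with hK
  have hK0 : 0 ≤ K := integral_nonneg fun z => by positivity
  -- bounds on Dbar
  have hbound : ∀ δ : ℝ, 0 < δ → ∀ χ : {c : ℝ // 0 < c},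
      cst - γ1 * (χ : ℝ) / (2 * σ) ≤ Dbar δ γ1 γ2 (χ : ℝ) ∧
      Dbar δ γ1 γ2 (χ : ℝ) ≤ cst + (δ / σ) * K := by
    intro δ hδ χ
    simp only [hDbar]
    set I : ℝ := ∫ z : ℝ × ℝ,
        (C * ((max (|a * z.1 + z.2| - ε / σ) 0) - C * γ1 / (2 * (χ:ℝ))) *
            (if (max (|a * z.1 + z.2| - ε / σ) 0) * (χ:ℝ) > γ1 * C then (1:ℝ) else 0) +
          ((χ:ℝ) / (2 * γ1)) * (max (|a * z.1 + z.2| - ε / σ) 0) ^ 2 *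
            (if (max (|a * z.1 + z.2| - ε / σ) 0) * (χ:ℝ) ≤ γ1 * C then (1:ℝ) else 0))
        ∂((gaussianReal 0 1).prod ν) with hI
    have hI0 : 0 ≤ I :=
      integral_nonneg fun z =>
        (ssvr_ebound C γ1 (χ:ℝ) _ hC hγ1 χ.2 (le_max_right _ _)).1
    have hIK : I ≤ K := by
      refine integral_mono_of_nonneg (ae_of_all _ fun z =>
        (ssvr_ebound C γ1 (χ:ℝ) _ hC hγ1 χ.2 (le_max_right _ _)).1) hdom
        (ae_of_all _ fun z => ?_)
      refine le_trans (ssvr_ebound C γ1 (χ:ℝ) _ hC hγ1 χ.2 (le_max_right _ _)).2 ?_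
      exact mul_le_mul_of_nonneg_left (hMle z) hC.le
    have hδσ : 0 ≤ δ / σ := div_nonneg hδ.le hσ.le
    have hχσ : 0 ≤ γ1 * (χ:ℝ) / (2 * σ) := div_nonneg (mul_nonneg hγ1.le χ.2.le) (by positivity)
    constructor
    · have : 0 ≤ (δ / σ) * I := mul_nonneg hδσ hI0
      simp only [hcst]; linarith
    · have : (δ / σ) * I ≤ (δ / σ) * K := mul_le_mul_of_nonneg_left hIK hδσ
      simp only [hcst]; linarith
  have hub : ∀ δ : ℝ, 0 < δ →
      (⨆ χ : {c : ℝ // 0 < c}, Dbar δ γ1 γ2 (χ : ℝ)) ≤ cst + (δ / σ) * K :=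
    fun δ hδ => ciSup_le fun χ => (hbound δ hδ χ).2
  have hlb : ∀ δ : ℝ, 0 < δ → cst ≤ ⨆ χ : {c : ℝ // 0 < c}, Dbar δ γ1 γ2 (χ : ℝ) := by
    intro δ hδ
    have hbdd : BddAbove (Set.range fun χ : {c : ℝ // 0 < c} => Dbar δ γ1 γ2 (χ : ℝ)) := by
      refine ⟨cst + (δ / σ) * K, ?_⟩
      rintro _ ⟨χ, rfl⟩
      exact (hbound δ hδ χ).2
    refine le_of_forall_pos_le_add fun η hη => ?_
    have hχpos : 0 < 2 * σ * η / γ1 := by positivity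
    have h1 := le_ciSup hbdd ⟨2 * σ * η / γ1, hχpos⟩
    have h2 := (hbound δ hδ ⟨2 * σ * η / γ1, hχpos⟩).1
    have h3 : γ1 * (2 * σ * η / γ1) / (2 * σ) = η := by
      field_simp
    simp only [h3] at h2
    have h1' : Dbar δ γ1 γ2 (2 * σ * η / γ1) ≤ ⨆ χ : {c : ℝ // 0 < c}, Dbar δ γ1 γ2 (χ : ℝ) := h1
    calc cst ≤ Dbar δ γ1 γ2 (2 * σ * η / γ1) + η := by linarith
      _ ≤ (⨆ χ : {c : ℝ // 0 < c}, Dbar δ γ1 γ2 (χ : ℝ)) + η := by linarith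
  -- squeeze
  have hupper : Tendsto (fun δ : ℝ => cst + (δ / σ) * K) (𝓝[>] 0) (𝓝 cst) := by
    have h : Tendsto (fun δ : ℝ => cst + (δ / σ) * K) (𝓝 0) (𝓝 (cst + (0 / σ) * K)) :=
      (continuous_const.add ((continuous_id.div_const σ).mul continuous_const)).tendsto 0
    simp only [zero_div, zero_mul, add_zero] at h
    exact h.mono_left nhdsWithin_le_nhds
  refine tendsto_of_tendsto_of_tendsto_of_le_of_le' tendsto_const_nhds hupper ?_ ?_
  · filter_upwards [self_mem_nhdsWithin] with δ hδ
    exact hlb δ hδ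
  · filter_upwards [self_mem_nhdsWithin] with δ hδ
    exact hub δ hδ
end

section
/- Outer relaxation of a constrained minimum: let S be a nonempty compact subset of ℝ^d, let f and c be continuous real-valued functions on S, and assume the set {x ∈ S : c(x) ≤ 0} is nonempty. Then min over {x ∈ S : c(x) ≤ 0} of f(x) equals sup over δ > 0 of ( min over {x ∈ S : c(x) ≤ δ} of f(x) ), and equivalently min over {x ∈ S : c(x) ≤ δ} of f(x) converges to min over {x ∈ S : c(x) ≤ 0} of f(x) as δ → 0⁺. -/
open Filter Topology

/-!
Let `m δ` be the minimum of `f` over `{x ∈ S | c x ≤ δ}`; it is antitone in `δ`, so only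
`m δ → m 0` from below needs proof. Given `a < m 0`, on the compact set `K = {x ∈ S | f x ≤ a}`
the constraint is violated, so by compactness `c > δ` on `K` for some `δ > 0`. Hence every point
of the relaxed feasible set `{c ≤ δ}` lies outside `K`, i.e. `a ≤ m δ`.
-/

theorem IsCompact.sep_le_of_continuousOn {X α : Type*} [TopologicalSpace X] [TopologicalSpace α]
    [Preorder α] [ClosedIicTopology α] {S : Set X} (hS : IsCompact S) {f : X → α}
    (hf : ContinuousOn f S) (a : α) : IsCompact {x ∈ S | f x ≤ a} := by
  obtain ⟨u, hu, hfu⟩ := continuousOn_iff_isClosed.1 hf (Set.Iic a) isClosed_Iic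
  have hK : {x ∈ S | f x ≤ a} = u ∩ S := by
    rw [← hfu, Set.inter_comm]
    rfl
  rw [hK]
  exact hS.inter_left hu

theorem sep_le_mono {X : Type*} {S : Set X} {c : X → ℝ} {δ₁ δ₂ : ℝ} (h : δ₁ ≤ δ₂) :
    {x ∈ S | c x ≤ δ₁} ⊆ {x ∈ S | c x ≤ δ₂} :=
  fun _ hx => ⟨hx.1, hx.2.trans h⟩

noncomputable def relaxedMin {X : Type*} (S : Set X) (f c : X → ℝ) (δ : ℝ) : ℝ :=
  sInf (f '' {x ∈ S | c x ≤ δ})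

namespace relaxedMin

variable {X : Type*} {S : Set X} {f c : X → ℝ}

theorem anti {δ₁ δ₂ : ℝ} (hbdd : BddBelow (f '' S)) (hne : {x ∈ S | c x ≤ δ₁}.Nonempty)
    (h : δ₁ ≤ δ₂) : relaxedMin S f c δ₂ ≤ relaxedMin S f c δ₁ :=
  csInf_le_csInf (hbdd.mono (Set.image_mono (Set.sep_subset _ _))) (hne.image f)
    (Set.image_mono (sep_le_mono h))

variable [TopologicalSpace X]

theorem exists_gt_of_lt (hS : IsCompact S) (hf : ContinuousOn f S) (hc : ContinuousOn c S)
    {δ₀ : ℝ} (hne : {x ∈ S | c x ≤ δ₀}.Nonempty) {a : ℝ} (ha : a < relaxedMin S f c δ₀) :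
    ∃ δ, δ₀ < δ ∧ a < relaxedMin S f c δ := by
  obtain ⟨b, hab, hb⟩ := exists_between ha
  have hbdd : BddBelow (f '' S) := (hS.image_of_continuousOn hf).bddBelow
  have hK : IsCompact {x ∈ S | f x ≤ b} := hS.sep_le_of_continuousOn hf b
  have hinfeasible : ∀ x ∈ {x ∈ S | f x ≤ b}, δ₀ < c x := by
    rintro x ⟨hxS, hxb⟩
    by_contra! hx
    have : relaxedMin S f c δ₀ ≤ f x :=
      csInf_le (hbdd.mono (Set.image_mono (Set.sep_subset _ _))) ⟨x, ⟨hxS, hx⟩, rfl⟩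
    linarith
  obtain ⟨δ₁, hδ₀₁, hδ₁⟩ := hK.exists_forall_le' (hc.mono (Set.sep_subset _ _)) hinfeasible
  obtain ⟨δ, hδ₀, hδ⟩ := exists_between hδ₀₁
  refine ⟨δ, hδ₀, hab.trans_le ?_⟩
  refine le_csInf ((hne.mono (sep_le_mono hδ₀.le)).image f) ?_
  rintro _ ⟨x, ⟨hxS, hxδ⟩, rfl⟩
  by_contra! hxb
  have := hδ₁ x ⟨hxS, hxb.le⟩
  linarith

theorem tendsto_nhdsGT (hS : IsCompact S) (hf : ContinuousOn f S) (hc : ContinuousOn c S)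
    {δ₀ : ℝ} (hne : {x ∈ S | c x ≤ δ₀}.Nonempty) :
    Tendsto (relaxedMin S f c) (𝓝[>] δ₀) (𝓝 (relaxedMin S f c δ₀)) := by
  have hbdd : BddBelow (f '' S) := (hS.image_of_continuousOn hf).bddBelow
  refine tendsto_order.2 ⟨fun a ha => ?_, fun b hb => ?_⟩
  · obtain ⟨δ, hδ₀, hδ⟩ := exists_gt_of_lt hS hf hc hne ha
    filter_upwards [Ioc_mem_nhdsGT hδ₀] with r ⟨hr₀, hrδ⟩
    exact hδ.trans_le (anti hbdd (hne.mono (sep_le_mono hr₀.le)) hrδ)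
  · filter_upwards [self_mem_nhdsWithin] with r hr
    exact (anti hbdd hne (le_of_lt hr)).trans_lt hb

theorem eq_iSup (hS : IsCompact S) (hf : ContinuousOn f S) (hc : ContinuousOn c S)
    {δ₀ : ℝ} (hne : {x ∈ S | c x ≤ δ₀}.Nonempty) :
    relaxedMin S f c δ₀ = ⨆ δ : {r : ℝ // δ₀ < r}, relaxedMin S f c δ := by
  have hbdd : BddBelow (f '' S) := (hS.image_of_continuousOn hf).bddBelow
  have : Nonempty {r : ℝ // δ₀ < r} := ⟨⟨δ₀ + 1, by linarith⟩⟩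
  refine (ciSup_eq_of_forall_le_of_forall_lt_exists_gt (fun δ => anti hbdd hne δ.2.le)
    fun a ha => ?_).symm
  obtain ⟨δ, hδ₀, hδ⟩ := exists_gt_of_lt hS hf hc hne ha
  exact ⟨⟨δ, hδ₀⟩, hδ⟩

end relaxedMin

theorem constrained_min_outer_relaxation_general (d : ℕ)
    (S : Set (EuclideanSpace ℝ (Fin d))) (hScomp : IsCompact S)
    (f c : EuclideanSpace ℝ (Fin d) → ℝ)
    (hf : ContinuousOn f S) (hc : ContinuousOn c S)
    (hne : {x ∈ S | c x ≤ 0}.Nonempty) :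
    sInf (f '' {x ∈ S | c x ≤ 0}) =
      (⨆ δ : {r : ℝ // 0 < r}, sInf (f '' {x ∈ S | c x ≤ (δ : ℝ)})) ∧
    Tendsto (fun δ : ℝ => sInf (f '' {x ∈ S | c x ≤ δ})) (𝓝[>] 0)
      (𝓝 (sInf (f '' {x ∈ S | c x ≤ 0}))) :=
  ⟨relaxedMin.eq_iSup hScomp hf hc hne, relaxedMin.tendsto_nhdsGT hScomp hf hc hne⟩

/-- **Outer relaxation of a constrained minimum.** Let `S` be a nonempty compact subset of
`ℝ^d`, `f` and `c` continuous on `S`, and `{x ∈ S : c x ≤ 0}` nonempty. Then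
`min_{x ∈ S, c x ≤ 0} f x = sup_{δ > 0} min_{x ∈ S, c x ≤ δ} f x`, and the relaxed minima
converge to the constrained minimum as `δ → 0⁺`. -/
theorem constrained_min_outer_relaxation (d : ℕ)
    (S : Set (EuclideanSpace ℝ (Fin d))) (hScomp : IsCompact S) (hSne : S.Nonempty)
    (f c : EuclideanSpace ℝ (Fin d) → ℝ)
    (hf : ContinuousOn f S) (hc : ContinuousOn c S)
    (hne : {x ∈ S | c x ≤ 0}.Nonempty) :
    sInf (f '' {x ∈ S | c x ≤ 0}) =
      (⨆ δ : {r : ℝ // 0 < r}, sInf (f '' {x ∈ S | c x ≤ (δ : ℝ)})) ∧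
    Tendsto (fun δ : ℝ => sInf (f '' {x ∈ S | c x ≤ δ})) (𝓝[>] 0)
      (𝓝 (sInf (f '' {x ∈ S | c x ≤ 0}))) :=
  constrained_min_outer_relaxation_general d S hScomp f c hf hc hne
end

section
/- Box-constrained maximization with ℓ₁ and Euclidean penalties: let a ∈ ℝⁿ, τ > 0, ε ≥ 0 and β > 0, and set b_i = (|a_i| − ε)₊ for i = 1,…,n. Then max over u ∈ ℝⁿ with |u_i| ≤ τ for all i of (aᵀu − ε‖u‖₁ − β‖u‖₂) equals sup over χ > 0 of ψ(χ), where ψ(χ) = Σ_{i=1}^n (b_i²χ/(2β))·1{b_iχ/β ≤ τ} + Σ_{i=1}^n (b_iτ − βτ²/(2χ))·1{b_iχ/β > τ} − βχ/2. Moreover the function ψ is concave on (0, ∞). -/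
open Finset

private lemma phi_lower {β τ c χ t : ℝ} (hβ : 0 < β) (hχ : 0 < χ) (ht0 : 0 ≤ t) (ht1 : t ≤ τ) :
    c * t - β * t ^ 2 / (2 * χ) ≤
      (if c * χ / β ≤ τ then c ^ 2 * χ / (2 * β) else c * τ - β * τ ^ 2 / (2 * χ)) := by
  split_ifs with h
  · rw [div_le_iff₀ hβ] at h
    rw [sub_le_iff_le_add, div_add_div _ _ (by positivity : (2:ℝ)*β ≠ 0) (by positivity : (2:ℝ)*χ ≠ 0), le_div_iff₀ (by positivity)]
    nlinarith [sq_nonneg (c * χ - β * t), mul_pos hβ hχ]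
  · have h' : τ * β < c * χ := by rwa [not_le, lt_div_iff₀ hβ] at h
    have key : β * τ ^ 2 / (2 * χ) - β * t ^ 2 / (2 * χ) ≤ c * τ - c * t := by
      rw [div_sub_div_same, div_le_iff₀ (by positivity)]
      nlinarith [mul_nonneg (sub_nonneg.mpr ht1)
        (show (0:ℝ) ≤ 2 * c * χ - β * (τ + t) by nlinarith [mul_le_mul_of_nonneg_left ht1 hβ.le])]
    linarith

private lemma phi_le {β τ c χ μ : ℝ} (hβ : 0 < β) (hτ : 0 < τ) (hχ : 0 < χ) (hμ : 0 ≤ μ) :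
    (if c * χ / β ≤ τ then c ^ 2 * χ / (2 * β) else c * τ - β * τ ^ 2 / (2 * χ))
      ≤ μ * τ + (c - μ) ^ 2 * χ / (2 * β) := by
  split_ifs with h
  · rw [div_le_iff₀ hβ] at h
    have key : c ^ 2 * χ / (2 * β) - (c - μ) ^ 2 * χ / (2 * β) ≤ μ * τ := by
      rw [div_sub_div_same, div_le_iff₀ (by positivity)]
      nlinarith [mul_nonneg (mul_nonneg hμ hμ) hχ.le, mul_le_mul_of_nonneg_left h hμ]
    linarith
  · have h' : τ * β < c * χ := by rwa [not_le, lt_div_iff₀ hβ] at h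
    have key : c * τ - μ * τ ≤ (c - μ) ^ 2 * χ / (2 * β) + β * τ ^ 2 / (2 * χ) := by
      rw [div_add_div _ _ (by positivity : (2:ℝ)*β ≠ 0) (by positivity : (2:ℝ)*χ ≠ 0), le_div_iff₀ (by positivity)]
      nlinarith [sq_nonneg ((c - μ) * χ - β * τ)]
    linarith

private lemma phi_concave_term {β τ c x y p q : ℝ} (hβ : 0 < β) (hτ : 0 < τ)
    (hx : 0 < x) (hy : 0 < y) (hp : 0 ≤ p) (hq : 0 ≤ q) (hpq : p + q = 1)
    (hz : 0 < p * x + q * y) :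
    p * (if c * x / β ≤ τ then c ^ 2 * x / (2 * β) else c * τ - β * τ ^ 2 / (2 * x)) +
    q * (if c * y / β ≤ τ then c ^ 2 * y / (2 * β) else c * τ - β * τ ^ 2 / (2 * y)) ≤
    (if c * (p * x + q * y) / β ≤ τ then c ^ 2 * (p * x + q * y) / (2 * β)
      else c * τ - β * τ ^ 2 / (2 * (p * x + q * y))) := by
  set z := p * x + q * y with hzdef
  set μ : ℝ := if c * z / β ≤ τ then 0 else c - τ * β / z with hμdef
  have hμ0 : 0 ≤ μ := by
    rw [hμdef]; split_ifs with h
    · exact le_rfl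
    · have h' : τ * β < c * z := by rwa [not_le, lt_div_iff₀ hβ] at h
      rw [sub_nonneg, div_le_iff₀ hz]; linarith
  have heq : (if c * z / β ≤ τ then c ^ 2 * z / (2 * β) else c * τ - β * τ ^ 2 / (2 * z))
      = μ * τ + (c - μ) ^ 2 * z / (2 * β) := by
    rw [hμdef]; split_ifs with h
    · ring
    · field_simp
      ring
  have hlex := phi_le (τ := τ) (c := c) (χ := x) hβ hτ hx hμ0
  have hley := phi_le (τ := τ) (c := c) (χ := y) hβ hτ hy hμ0
  have hcomb : p * (μ * τ + (c - μ) ^ 2 * x / (2 * β)) + q * (μ * τ + (c - μ) ^ 2 * y / (2 * β))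
      = μ * τ + (c - μ) ^ 2 * z / (2 * β) := by
    rw [hzdef]; field_simp; linear_combination (μ * τ * (2*β)) * hpq
  rw [heq, ← hcomb]
  exact add_le_add (mul_le_mul_of_nonneg_left hlex hp) (mul_le_mul_of_nonneg_left hley hq)

private lemma sign_abs_le' (x : ℝ) : |Real.sign x| ≤ 1 := by
  rcases lt_trichotomy x 0 with h | h | h
  · simp [Real.sign_of_neg h]
  · simp [h]
  · simp [Real.sign_of_pos h]

private lemma phi_min_eq' {β τ c χ : ℝ} (hβ : 0 < β) (hχ : 0 < χ) :
    (if c * χ / β ≤ τ then c ^ 2 * χ / (2 * β) else c * τ - β * τ ^ 2 / (2 * χ))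
      = c * min (c * χ / β) τ - β * (min (c * χ / β) τ) ^ 2 / (2 * χ) := by
  split_ifs with h
  · rw [min_eq_left h]; field_simp; ring
  · rw [min_eq_right (not_le.mp h).le]


/-- **Box-constrained maximization with ℓ₁ and Euclidean penalties.** For `a ∈ ℝⁿ`, `τ > 0`,
`ε ≥ 0`, `β > 0` and `bᵢ = (|aᵢ| - ε)₊`, the maximum of `aᵀu - ε‖u‖₁ - β‖u‖₂` over `u ∈ ℝⁿ`
with `|uᵢ| ≤ τ` for all `i` equals `sup_{χ>0} ψ(χ)`, where
`ψ(χ) = ∑ᵢ (bᵢ²χ/(2β))·1{bᵢχ/β ≤ τ} + ∑ᵢ (bᵢτ - βτ²/(2χ))·1{bᵢχ/β > τ} - βχ/2`;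
moreover `ψ` is concave on `(0, ∞)`. -/
theorem box_max_l1_l2_penalty (n : ℕ) (τ ε β : ℝ) (hτ : 0 < τ) (hε : 0 ≤ ε) (hβ : 0 < β)
    (a : Fin n → ℝ) (b : Fin n → ℝ) (hb : ∀ i, b i = max (|a i| - ε) 0)
    (ψ : ℝ → ℝ)
    (hψ : ψ = fun χ =>
      (∑ i, (if b i * χ / β ≤ τ then (b i) ^ 2 * χ / (2 * β) else 0)) +
      (∑ i, (if b i * χ / β ≤ τ then 0 else b i * τ - β * τ ^ 2 / (2 * χ))) -
      β * χ / 2) :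
    IsGreatest
      {v : ℝ | ∃ u : Fin n → ℝ, (∀ i, |u i| ≤ τ) ∧
        v = (∑ i, a i * u i) - ε * (∑ i, |u i|) - β * Real.sqrt (∑ i, (u i) ^ 2)}
      (⨆ χ : {c : ℝ // 0 < c}, ψ (χ : ℝ)) ∧
    ConcaveOn ℝ (Set.Ioi 0) ψ := by
  have hb0 : ∀ i, 0 ≤ b i := fun i => (hb i) ▸ le_max_right _ _
  -- merged form of ψ
  have hψ' : ∀ χ : ℝ, ψ χ =
      (∑ i, (if b i * χ / β ≤ τ then (b i) ^ 2 * χ / (2 * β)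
        else b i * τ - β * τ ^ 2 / (2 * χ))) - β * χ / 2 := by
    intro χ
    rw [hψ]
    simp only
    congr 1
    rw [← Finset.sum_add_distrib]
    refine Finset.sum_congr rfl fun i _ => ?_
    split_ifs <;> ring
  set f : (Fin n → ℝ) → ℝ := fun u =>
    (∑ i, a i * u i) - ε * (∑ i, |u i|) - β * Real.sqrt (∑ i, (u i) ^ 2) with hf_def
  set K : Set (Fin n → ℝ) := {u | ∀ i, |u i| ≤ τ} with hK_def
  have hf : Continuous f := by
    refine (Continuous.sub (Continuous.sub ?_ ?_) ?_)
    · exact continuous_finset_sum _ fun i _ => continuous_const.mul (continuous_apply i)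
    · exact continuous_const.mul (continuous_finset_sum _ fun i _ => (continuous_apply i).abs)
    · exact continuous_const.mul
        (Real.continuous_sqrt.comp (continuous_finset_sum _ fun i _ => (continuous_apply i).pow 2))
  have hKc : IsCompact K := by
    have : K = Set.pi Set.univ (fun _ : Fin n => Set.Icc (-τ) τ) := by
      ext u; simp [hK_def, Set.mem_pi, abs_le, forall_and, Pi.le_def]
    rw [this]
    exact isCompact_univ_pi fun _ => isCompact_Icc
  have hKne : K.Nonempty := ⟨0, fun i => by simp [hτ.le]⟩
  obtain ⟨u₀, hu₀K, hu₀max⟩ := hKc.exists_isMaxOn hKne hf.continuousOn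
  -- key 1 : for each χ > 0, ψ χ is attained-dominated by some feasible u
  have key1 : ∀ χ : ℝ, 0 < χ → ∃ u ∈ K, ψ χ ≤ f u := by
    intro χ hχ
    set t : Fin n → ℝ := fun i => min (b i * χ / β) τ with ht_def
    have ht0 : ∀ i, 0 ≤ t i := fun i =>
      le_min (div_nonneg (mul_nonneg (hb0 i) hχ.le) hβ.le) hτ.le
    have ht1 : ∀ i, t i ≤ τ := fun i => min_le_right _ _
    set u : Fin n → ℝ := fun i => Real.sign (a i) * t i with hu_def
    have htzero : ∀ i, b i = 0 → t i = 0 := by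
      intro i h; simp [ht_def, h, hτ.le]
    have habs : ∀ i, |u i| = t i := by
      intro i
      by_cases hbi : b i = 0
      · simp [hu_def, htzero i hbi]
      · have hai : ε < |a i| := by
          by_contra hcon
          push_neg at hcon
          exact hbi ((hb i).trans (max_eq_right (by linarith)))
        have hane : a i ≠ 0 := by
          intro h0; rw [h0] at hai; simp at hai; linarith
        rw [hu_def]
        simp only
        rw [abs_mul, abs_of_nonneg (ht0 i)]
        rcases hane.lt_or_gt with h | h
        · simp [Real.sign_of_neg h]
        · simp [Real.sign_of_pos h]
    have hid : ∀ i, a i * u i - ε * |u i| = b i * t i := by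
      intro i
      by_cases hbi : b i = 0
      · simp [hu_def, htzero i hbi, hbi]
      · have hai : ε < |a i| := by
          by_contra hcon
          push_neg at hcon
          exact hbi ((hb i).trans (max_eq_right (by linarith)))
        have hbe : b i = |a i| - ε := (hb i).trans (max_eq_left (by linarith))
        have hane : a i ≠ 0 := by
          intro h0; rw [h0] at hai; simp at hai; linarith
        rw [habs i, hbe, hu_def]
        simp only
        rcases hane.lt_or_gt with h | h
        · rw [Real.sign_of_neg h, abs_of_neg h]; ring
        · rw [Real.sign_of_pos h, abs_of_pos h]; ring
    have hsq : ∀ i, (u i) ^ 2 = (t i) ^ 2 := by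
      intro i; rw [← sq_abs (u i), habs i]
    have huK : u ∈ K := fun i => (habs i) ▸ ht1 i
    refine ⟨u, huK, ?_⟩
    have hfu : f u = (∑ i, b i * t i) - β * Real.sqrt (∑ i, (t i) ^ 2) := by
      rw [hf_def]
      simp only
      rw [Finset.mul_sum, ← Finset.sum_sub_distrib]
      congr 1
      · exact Finset.sum_congr rfl fun i _ => hid i
      · congr 1; congr 1; exact Finset.sum_congr rfl fun i _ => hsq i
    rw [hfu, hψ' χ]
    have hpsival : (∑ i, (if b i * χ / β ≤ τ then (b i) ^ 2 * χ / (2 * β)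
        else b i * τ - β * τ ^ 2 / (2 * χ)))
        = (∑ i, b i * t i) - β * (∑ i, (t i) ^ 2) / (2 * χ) := by
      rw [Finset.mul_sum, Finset.sum_div, ← Finset.sum_sub_distrib]
      exact Finset.sum_congr rfl fun i _ => phi_min_eq' hβ hχ
    rw [hpsival]
    set X : ℝ := ∑ i, (t i) ^ 2 with hX_def
    have hX0 : 0 ≤ X := Finset.sum_nonneg fun i _ => sq_nonneg _
    have hamgm : β * Real.sqrt X ≤ β * X / (2 * χ) + β * χ / 2 := by
      have hkey : 2 * χ * Real.sqrt X ≤ X + χ ^ 2 := by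
        nlinarith [sq_nonneg (Real.sqrt X - χ), Real.sq_sqrt hX0]
      have h1 : β * Real.sqrt X ≤ β * (X + χ ^ 2) / (2 * χ) := by
        rw [le_div_iff₀ (by positivity)]
        nlinarith [mul_le_mul_of_nonneg_left hkey hβ.le]
      have h2 : β * (X + χ ^ 2) / (2 * χ) = β * X / (2 * χ) + β * χ / 2 := by
        field_simp
      linarith
    linarith
  -- boundedness of the range of ψ on positives
  haveI : Nonempty {c : ℝ // 0 < c} := ⟨⟨1, one_pos⟩⟩
  have hbdd : BddAbove (Set.range fun χ : {c : ℝ // 0 < c} => ψ (χ : ℝ)) := by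
    refine ⟨f u₀, ?_⟩
    rintro v ⟨χ, rfl⟩
    obtain ⟨u, huK, hle⟩ := key1 χ χ.2
    exact hle.trans (hu₀max huK)
  set V : ℝ := ⨆ χ : {c : ℝ // 0 < c}, ψ (χ : ℝ) with hV_def
  -- key 2 : every feasible value is at most V
  have key2 : ∀ u : Fin n → ℝ, (∀ i, |u i| ≤ τ) → f u ≤ V := by
    intro u hu
    set X : ℝ := ∑ i, (u i) ^ 2 with hX_def
    have hX0 : 0 ≤ X := Finset.sum_nonneg fun i _ => sq_nonneg _
    set s : ℝ := Real.sqrt X with hs_def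
    have hs0 : 0 ≤ s := Real.sqrt_nonneg _
    have h1 : f u ≤ (∑ i, b i * |u i|) - β * s := by
      rw [hf_def]
      simp only
      rw [Finset.mul_sum, ← Finset.sum_sub_distrib]
      refine sub_le_sub_right (Finset.sum_le_sum fun i _ => ?_) _
      have hau : a i * u i ≤ |a i| * |u i| := by
        rw [← abs_mul]; exact le_abs_self _
      have hbge : |a i| - ε ≤ b i := (hb i) ▸ le_max_left _ _
      nlinarith [abs_nonneg (u i), mul_le_mul_of_nonneg_right hbge (abs_nonneg (u i))]
    rcases hs0.eq_or_lt with hs | hs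
    · -- u = 0 case : f u = 0 and 0 ≤ V
      have hXz : X = 0 := by
        have := Real.sqrt_eq_zero'.mp hs.symm
        linarith
      have huz : ∀ i, u i = 0 := by
        intro i
        have := (Finset.sum_eq_zero_iff_of_nonneg (fun i _ => sq_nonneg (u i))).mp hXz i
          (Finset.mem_univ i)
        exact (pow_eq_zero_iff two_ne_zero).mp (by simpa using this)
      have hfu0 : f u = 0 := by
        rw [hf_def]; simp [huz]
      rw [hfu0]
      -- 0 ≤ V
      have hψlb : ∀ χ : ℝ, 0 < χ → -(β * χ / 2) ≤ ψ χ := by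
        intro χ hχ
        rw [hψ' χ]
        have : (0:ℝ) ≤ ∑ i, (if b i * χ / β ≤ τ then (b i) ^ 2 * χ / (2 * β)
            else b i * τ - β * τ ^ 2 / (2 * χ)) := by
          refine Finset.sum_nonneg fun i _ => ?_
          have := phi_lower (τ := τ) (c := b i) (t := 0) hβ hχ le_rfl hτ.le
          simpa using this
        linarith
      refine le_of_forall_pos_le_add fun η hη => ?_
      have hχη : (0:ℝ) < 2 * η / β := by positivity
      have h2 := le_ciSup hbdd ⟨2 * η / β, hχη⟩
      have h3 := hψlb _ hχη
      have h4 : β * (2 * η / β) / 2 = η := by field_simp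
      simp only at h2
      rw [h4] at h3
      linarith
    · -- s > 0 : compare with ψ s
      have hψs : (∑ i, b i * |u i|) - β * s ≤ ψ s := by
        rw [hψ' s]
        have hterm : ∀ i ∈ Finset.univ, b i * |u i| - β * (u i) ^ 2 / (2 * s) ≤
            (if b i * s / β ≤ τ then (b i) ^ 2 * s / (2 * β)
              else b i * τ - β * τ ^ 2 / (2 * s)) := by
          intro i _
          have := phi_lower (τ := τ) (c := b i) (t := |u i|) hβ hs (abs_nonneg _) (hu i)
          rwa [sq_abs] at this
        have hsum := Finset.sum_le_sum hterm
        have hXs : (∑ i, β * (u i) ^ 2 / (2 * s)) = β * s / 2 := by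
          rw [← Finset.sum_div, ← Finset.mul_sum, ← hX_def, ← Real.sq_sqrt hX0, ← hs_def]
          field_simp
        rw [Finset.sum_sub_distrib, hXs] at hsum
        linarith
      have := le_ciSup hbdd ⟨s, hs⟩
      simp only at this
      linarith
  -- assemble IsGreatest
  have hVM : f u₀ = V := by
    refine le_antisymm (key2 u₀ hu₀K) (ciSup_le fun χ => ?_)
    obtain ⟨u, huK, hle⟩ := key1 χ χ.2
    exact hle.trans (hu₀max huK)
  constructor
  · constructor
    · exact ⟨u₀, hu₀K, hVM.symm⟩
    · rintro v ⟨u, hu, rfl⟩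
      exact key2 u hu
  · -- concavity
    refine ⟨convex_Ioi 0, ?_⟩
    intro x hx y hy p q hp hq hpq
    simp only [smul_eq_mul]
    have hx' : (0:ℝ) < x := hx
    have hy' : (0:ℝ) < y := hy
    have hz : (0:ℝ) < p * x + q * y := by
      have := (convex_Ioi (0:ℝ)) hx hy hp hq hpq
      simpa [smul_eq_mul] using this
    rw [hψ' x, hψ' y, hψ' (p * x + q * y)]
    have hsum : p * (∑ i, (if b i * x / β ≤ τ then (b i) ^ 2 * x / (2 * β)
          else b i * τ - β * τ ^ 2 / (2 * x))) +
        q * (∑ i, (if b i * y / β ≤ τ then (b i) ^ 2 * y / (2 * β)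
          else b i * τ - β * τ ^ 2 / (2 * y))) ≤
        ∑ i, (if b i * (p * x + q * y) / β ≤ τ then (b i) ^ 2 * (p * x + q * y) / (2 * β)
          else b i * τ - β * τ ^ 2 / (2 * (p * x + q * y))) := by
      rw [Finset.mul_sum, Finset.mul_sum, ← Finset.sum_add_distrib]
      exact Finset.sum_le_sum fun i _ =>
        phi_concave_term hβ hτ hx' hy' hp hq hpq hz
    nlinarith [hsum]
end
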